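/- arXiv:1609.04100 — 2 statements merged into one kernel-verified Lean document; each statement's English description precedes it below -/
import Mathlib

section
/- The rule R□ of G3K is sound: if the labeled sequent xRy, Γ ⊢ Δ, y:A is valid, where the label y does not occur in Γ, Δ, x or A, then the sequent Γ ⊢ Δ, x:□A is valid. -/
/-- Propositional modal formulas. -/
inductive MF (P : Type) : Type
  | atom : P → MF P
  | neg  : MF P → MF P
  | and  : MF P → MF P → MF P
  | or   : MF P → MF P → MF P
  | box  : MF P → MF P
  | dia  : MF P → MF P

/-- A Kripke model over propositional symbols `P` with (nonempty) set of worlds `W`. -/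
structure Kripke (P : Type) (W : Type) where
  nonempty : Nonempty W
  R : W → W → Prop
  V : W → P → Prop

/-- Truth of a modal formula at a world of a Kripke model. -/
def sat {P W : Type} (M : Kripke P W) : W → MF P → Prop
  | w, .atom p  => M.V w p
  | w, .neg A   => ¬ sat M w A
  | w, .and A B => sat M w A ∧ sat M w B
  | w, .or A B  => sat M w A ∨ sat M w B
  | w, .box A   => ∀ w', M.R w w' → sat M w' A
  | w, .dia A   => ∃ w', M.R w w' ∧ sat M w' A

/-- G3K formulas: labeled formulas `x:A` and relational atoms `x R y`. -/
inductive LabF (L P : Type) : Type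
  | lab : L → MF P → LabF L P
  | rel : L → L → LabF L P

/-- Satisfaction of a G3K formula in a Kripke model under an interpretation of labels. -/
def lsat {L P W : Type} (M : Kripke P W) (rho : L → W) : LabF L P → Prop
  | .lab x A => sat M (rho x) A
  | .rel x y => M.R (rho x) (rho y)

/-- A labeled sequent `Γ ⊢ Δ` is valid when, under every Kripke model and every
interpretation of labels into worlds, if all formulas of `Γ` are satisfied then some
formula of `Δ` is satisfied. -/
def seqValid {L P : Type} (Gamma Delta : List (LabF L P)) : Prop :=
  ∀ (W : Type) (M : Kripke P W) (rho : L → W),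
    (∀ phi ∈ Gamma, lsat M rho phi) → ∃ psi ∈ Delta, lsat M rho psi

/-- The label `y` does not occur in a G3K formula. -/
def freshFor {L P : Type} (y : L) : LabF L P → Prop
  | .lab z _ => y ≠ z
  | .rel z u => y ≠ z ∧ y ≠ u

section Fresh

variable {L P W : Type} [DecidableEq L] (M : Kripke P W) (rho : L → W) {y : L} (w : W)

theorem lsat_update_of_freshFor {phi : LabF L P} (hy : freshFor y phi) :
    lsat M (Function.update rho y w) phi ↔ lsat M rho phi := by
  cases phi with
  | lab z _ => simp only [lsat, Function.update_of_ne (Ne.symm hy)]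
  | rel z u =>
    simp only [lsat, Function.update_of_ne (Ne.symm hy.1), Function.update_of_ne (Ne.symm hy.2)]

theorem forall_lsat_update_of_freshFor {Gamma : List (LabF L P)}
    (hy : ∀ phi ∈ Gamma, freshFor y phi) :
    (∀ phi ∈ Gamma, lsat M (Function.update rho y w) phi) ↔ ∀ phi ∈ Gamma, lsat M rho phi :=
  forall₂_congr fun phi hphi => lsat_update_of_freshFor M rho w (hy phi hphi)

theorem exists_lsat_update_of_freshFor {Delta : List (LabF L P)}
    (hy : ∀ psi ∈ Delta, freshFor y psi) :
    (∃ psi ∈ Delta, lsat M (Function.update rho y w) psi) ↔ ∃ psi ∈ Delta, lsat M rho psi :=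
  exists_congr fun psi => and_congr_right fun hpsi => lsat_update_of_freshFor M rho w (hy psi hpsi)

end Fresh

theorem exists_lsat_append_singleton {L P W : Type} (M : Kripke P W) (rho : L → W)
    (Delta : List (LabF L P)) (phi : LabF L P) :
    (∃ psi ∈ Delta ++ [phi], lsat M rho psi) ↔ (∃ psi ∈ Delta, lsat M rho psi) ∨ lsat M rho phi := by
  simp only [List.mem_append, List.mem_singleton, or_and_right, exists_or, exists_eq_left]

/-- Soundness of the rule `R□` of G3K: if `xRy, Γ ⊢ Δ, y:A` is valid and the label `y`
does not occur in `Γ`, `Δ` or `x`, then `Γ ⊢ Δ, x:□A` is valid. -/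
theorem Rbox_sound {L P : Type} (x y : L) (A : MF P) (Gamma Delta : List (LabF L P))
    (hyx : y ≠ x)
    (hG : ∀ phi ∈ Gamma, freshFor y phi)
    (hD : ∀ psi ∈ Delta, freshFor y psi)
    (h : seqValid (LabF.rel x y :: Gamma) (Delta ++ [LabF.lab y A])) :
    seqValid Gamma (Delta ++ [LabF.lab x (.box A)]) := by
  classical
  intro W M rho hΓ
  rw [exists_lsat_append_singleton]
  refine or_iff_not_imp_left.mpr fun hΔ w hxw => ?_
  -- Reinterpret the eigenvariable `y` as an arbitrary successor `w` of `x`.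
  have hR : lsat M (Function.update rho y w) (.rel x y) := by
    rwa [lsat, Function.update_self, Function.update_of_ne hyx.symm]
  have hpremise : ∀ phi ∈ LabF.rel x y :: Gamma, lsat M (Function.update rho y w) phi :=
    List.forall_mem_cons.mpr ⟨hR, (forall_lsat_update_of_freshFor M rho w hG).mpr hΓ⟩
  obtain hΔ' | hA := (exists_lsat_append_singleton ..).mp (h W M _ hpremise)
  · exact absurd ((exists_lsat_update_of_freshFor M rho w hD).mp hΔ') hΔ
  · rwa [lsat, Function.update_self] at hA
end

section
/- The rule L◇ of G3K is sound: if the sequent xRy, y:A, Γ ⊢ Δ is valid, where the label y does not occur in Γ, Δ, x or A, then the sequent x:◇A, Γ ⊢ Δ is valid. -/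
theorem lsat_update_iff_of_freshFor {L P W : Type} [DecidableEq L] (M : Kripke P W)
    (rho : L → W) {y : L} (w : W) {phi : LabF L P} (hy : freshFor y phi) :
    lsat M (Function.update rho y w) phi ↔ lsat M rho phi := by
  cases phi with
  | lab z _ => rw [lsat, lsat, Function.update_of_ne (Ne.symm hy)]
  | rel z u =>
    rw [lsat, lsat, Function.update_of_ne (Ne.symm hy.1), Function.update_of_ne (Ne.symm hy.2)]

/-- Soundness of the rule `L◇` of G3K: if `xRy, y:A, Γ ⊢ Δ` is valid and the label `y`
does not occur in `Γ`, `Δ` or `x`, then `x:◇A, Γ ⊢ Δ` is valid. -/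
theorem Ldia_sound {L P : Type} (x y : L) (A : MF P) (Gamma Delta : List (LabF L P))
    (hyx : y ≠ x)
    (hG : ∀ phi ∈ Gamma, freshFor y phi)
    (hD : ∀ psi ∈ Delta, freshFor y psi)
    (h : seqValid (LabF.rel x y :: LabF.lab y A :: Gamma) Delta) :
    seqValid (LabF.lab x (.dia A) :: Gamma) Delta := by
  classical
  intro W M rho hprem
  obtain ⟨w, hxw, hwA⟩ : sat M (rho x) (.dia A) := hprem _ List.mem_cons_self
  -- Interpret the eigenvariable `y` as the witness `w`; freshness makes this invisible elsewhere.
  set rho' := Function.update rho y w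
  have hGamma : ∀ phi ∈ Gamma, lsat M rho' phi := fun phi hphi =>
    (lsat_update_iff_of_freshFor M rho w (hG phi hphi)).mpr
      (hprem phi (List.mem_cons_of_mem _ hphi))
  have hrel : lsat M rho' (.rel x y) := by
    simpa only [lsat, rho', Function.update_self, Function.update_of_ne hyx.symm] using hxw
  have hlab : lsat M rho' (.lab y A) := by
    simpa only [lsat, rho', Function.update_self] using hwA
  obtain ⟨psi, hpsi, hsat⟩ :=
    h W M rho' (by simpa only [List.forall_mem_cons] using ⟨hrel, hlab, hGamma⟩)
  exact ⟨psi, hpsi, (lsat_update_iff_of_freshFor M rho w (hD psi hpsi)).mp hsat⟩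
end
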